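/- (Corollary 1 and simplified systematic encoding) Let ε ∈ [0,1], n a natural number, N = 2^n, and let A ⊆ Fin N satisfy Z_ε(j) < Z_ε(i) for every j ∈ A and i ∉ A. Then the submatrix G_{ĀA} of G = F^{⊗n} over GF(2), with rows indexed by the complement of A and columns indexed by A, is the zero matrix; consequently, for every vector u : Fin N → ZMod 2, the restriction of x = uG to the coordinates in A depends only on the restriction of u to A, namely x_j = ∑_{i ∈ A} u_i G_{i,j} for every j ∈ A. -/

import Mathlib

/-- The basic polar kernel `F = [[1,0],[1,1]]` over `GF(2)`. -/
def polarF : Matrix (Fin 2) (Fin 2) (ZMod 2) := !![1, 0; 1, 1]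

/-- The `n`-fold Kronecker power `G = F^{⊗n}` of the polar kernel over `GF(2)`,
indexed by `Fin (2^n)` (0-indexed), where the first Kronecker factor corresponds
to the most significant bit of the index. -/
def polarG : (n : ℕ) → Matrix (Fin (2 ^ n)) (Fin (2 ^ n)) (ZMod 2)
  | 0 => 1
  | n + 1 =>
    Matrix.reindex
      (finProdFinEquiv.trans (finCongr (by ring)))
      (finProdFinEquiv.trans (finCongr (by ring)))
      (Matrix.kroneckerMap (· * ·) polarF (polarG n))
/-- The Bhattacharyya parameter of the BEC bit channel described by the bit string
`b : Fin n → Bool`: starting from the erasure probability `ε`, the bits are processed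
from index `n-1` (most significant) down to index `0`, replacing the current value `z`
by `z^2` if the bit is `true` and by `2z - z^2` if the bit is `false`. -/
def Zrec (ε : ℝ) : (n : ℕ) → (Fin n → Bool) → ℝ
  | 0, _ => ε
  | n + 1, b =>
    let z := Zrec ε n fun m => b m.succ
    if b 0 then z ^ 2 else 2 * z - z ^ 2

/-- The Bhattacharyya parameter of bit channel `i`, obtained from the `n`-bit binary
expansion of `i`. -/
def Zbit (ε : ℝ) (n : ℕ) (i : Fin (2 ^ n)) : ℝ :=
  Zrec ε n fun m => Nat.testBit (i : ℕ) (m : ℕ)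

/-!
`F` is lower triangular, so an entry `G i j` of its Kronecker power can be nonzero only when
the binary digits of `j` are among those of `i`. On `[0,1]` the maps `z ↦ z²` and
`z ↦ 2z - z²` are monotone and the first lies below the second, so the Bhattacharyya
parameter only decreases when digits are added. Hence `G i j ≠ 0` forces `Z(i) ≤ Z(j)`,
which the choice of `A` rules out for `i ∉ A`, `j ∈ A`.
-/

lemma polarG_succ_apply (n : ℕ) (i j : Fin (2 ^ (n + 1))) :
    polarG (n + 1) i j =
      polarF ⟨i / 2 ^ n, Nat.div_lt_of_lt_mul (by grind)⟩
        ⟨j / 2 ^ n, Nat.div_lt_of_lt_mul (by grind)⟩ *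
      polarG n ⟨i % 2 ^ n, Nat.mod_lt _ (Nat.two_pow_pos n)⟩
        ⟨j % 2 ^ n, Nat.mod_lt _ (Nat.two_pow_pos n)⟩ := by
  simp [polarG, Matrix.kroneckerMap_apply, finProdFinEquiv, Fin.divNat, Fin.modNat]

lemma testBit_imp_of_polarF_ne_zero {a b : Fin 2} (h : polarF a b ≠ 0) (k : ℕ)
    (hb : (b : ℕ).testBit k) : (a : ℕ).testBit k := by
  fin_cases a <;> fin_cases b <;> simp_all [polarF]

lemma testBit_imp_of_polarG_ne_zero {n : ℕ} {i j : Fin (2 ^ n)} (h : polarG n i j ≠ 0)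
    (k : ℕ) (hj : (j : ℕ).testBit k) : (i : ℕ).testBit k := by
  induction n generalizing k with
  | zero => simp_all
  | succ n ih =>
    rw [polarG_succ_apply] at h
    obtain ⟨hF, hG⟩ := mul_ne_zero_iff.mp h
    rcases lt_or_ge k n with hk | hk
    · have := ih hG k (by simpa [hk] using hj)
      simpa [hk] using this
    · obtain ⟨m, rfl⟩ := Nat.exists_eq_add_of_le' hk
      have := testBit_imp_of_polarF_ne_zero hF m (by simpa [Nat.testBit_div_two_pow] using hj)
      simpa [Nat.testBit_div_two_pow] using this

lemma Zrec_mem_Icc {ε : ℝ} (hε : ε ∈ Set.Icc (0 : ℝ) 1) :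
    ∀ (n : ℕ) (b : Fin n → Bool), Zrec ε n b ∈ Set.Icc (0 : ℝ) 1
  | 0, _ => hε
  | n + 1, b => by
    obtain ⟨h0, h1⟩ := Zrec_mem_Icc hε n (fun m => b m.succ)
    simp only [Zrec]
    split <;> constructor <;> nlinarith

lemma Zrec_antitone {ε : ℝ} (hε : ε ∈ Set.Icc (0 : ℝ) 1) :
    ∀ n : ℕ, Antitone (Zrec ε n)
  | 0 => fun _ _ _ => le_rfl
  | n + 1 => fun b c hbc => by
    have hz := Zrec_antitone hε n fun m => hbc m.succ
    obtain ⟨hb0, hb1⟩ := Zrec_mem_Icc hε n (fun m => b m.succ)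
    obtain ⟨hc0, hc1⟩ := Zrec_mem_Icc hε n (fun m => c m.succ)
    have h0 := Bool.le_iff_imp.mp (hbc 0)
    simp only [Zrec]
    cases hb : b 0 <;> cases hc : c 0 <;> simp_all <;> nlinarith

/-- Corollary 1 and simplified systematic encoding: if the information
set `A` is chosen by the polar coding principle, then the submatrix `G_{ĀA}` (rows in
the complement of `A`, columns in `A`) is zero; consequently, for every
`u : Fin N → ZMod 2`, the restriction of `x = uG` to the coordinates in `A` depends
only on `u` restricted to `A`: `x_j = ∑_{i ∈ A} u_i G_{i,j}` for every `j ∈ A`. -/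
theorem polarG_systematic_simplification (n : ℕ) (ε : ℝ) (hε : ε ∈ Set.Icc (0 : ℝ) 1)
    (A : Finset (Fin (2 ^ n)))
    (hA : ∀ j ∈ A, ∀ i ∉ A, Zbit ε n j < Zbit ε n i) :
    (∀ i ∉ A, ∀ j ∈ A, polarG n i j = 0) ∧
    (∀ u : Fin (2 ^ n) → ZMod 2, ∀ j ∈ A,
      (∑ i : Fin (2 ^ n), u i * polarG n i j) = ∑ i ∈ A, u i * polarG n i j) := by
  have hzero : ∀ i ∉ A, ∀ j ∈ A, polarG n i j = 0 := by
    intro i hi j hj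
    by_contra hG
    have hle : Zbit ε n i ≤ Zbit ε n j := Zrec_antitone hε n fun m =>
      Bool.le_iff_imp.mpr (testBit_imp_of_polarG_ne_zero hG m)
    exact (hA j hj i hi).not_ge hle
  refine ⟨hzero, fun u j hj => ?_⟩
  refine (Finset.sum_subset (Finset.subset_univ A) fun i _ hi => ?_).symm
  rw [hzero i hi j hj, mul_zero]
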